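/- Let S = {x ∈ NICF_4 : −1/2 ≤ x < 1/2 and x is irrational}. Every positive element x of S satisfies (√6 − 2)/2 ≤ x ≤ √6 − 2; moreover (√6 − 2)/2 and √6 − 2 both belong to S, so (√6 − 2)/2 is the smallest positive element of S and √6 − 2 is the largest element of S. -/

import Mathlib

/-!
Write α = √6 - 2, so that α² + 4α = 2, i.e. α⁻¹ = α/2 + 2 and (α/2)⁻¹ = α + 4. For irrational `x`
the remainders `rᵢ = xᵢ - aᵢ` lie in (-1/2, 1/2) and `x_{i+1} = rᵢ⁻¹`. If `rᵢ > α`, then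
`a_{i+1} = 2`, `r_{i+1} ∈ (0, α/2)`, and the digit bound `a_{i+2} ≤ 4` forces
`r_{i+2} - α ≥ 2 (rᵢ - α)`; iterating contradicts `|r| < 1/2`, so every `rᵢ ≤ α`. If
`0 < rᵢ < α/2`, then `r_{i+1} ≥ rᵢ⁻¹ - 4 > α`, which was just excluded. Since `r₀ = x` on
[-1/2, 1/2), this gives the bounds; conversely the remainders of α and α/2 alternate between
α and α/2 with digits 2 and 4.
-/

/-- NICF iterates: `x₀ = x`, `x_{i+1} = 1/(x_i - ⌊x_i⌉)`, with `⌊t⌉ = round t = ⌊t + 1/2⌋`. -/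
noncomputable def nicfX (x : ℝ) : ℕ → ℝ
  | 0 => x
  | n + 1 => 1 / (nicfX x n - round (nicfX x n))

/-- The `i`-th NICF digit of `x`. -/
noncomputable def nicfDigit (x : ℝ) (i : ℕ) : ℤ := round (nicfX x i)

/-- The `i`-th NICF digit is genuinely defined: the algorithm has not terminated before
step `i` (i.e. `x_m ≠ a_m` for all `m < i`). -/
def nicfDefined (x : ℝ) (i : ℕ) : Prop :=
  ∀ m, m < i → nicfX x m ≠ (nicfDigit x m : ℝ)

/-- `NICFset r`: the reals all of whose NICF digits `a_i` with `i ≥ 1` satisfy `|a_i| ≤ r`. -/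
def NICFset (r : ℤ) : Set ℝ :=
  {x | ∀ i : ℕ, 1 ≤ i → nicfDefined x i → |nicfDigit x i| ≤ r}

/-- The irrational elements of `NICF₄` lying in `[-1/2, 1/2)`. -/
noncomputable def NICF4irr : Set ℝ :=
  {x | x ∈ NICFset 4 ∧ -(1 / 2) ≤ x ∧ x < 1 / 2 ∧ Irrational x}

theorem le_of_forall_lt_imp_mul_sub_le {f : ℕ → ℝ} {B c r : ℝ} (hr : 1 < r)
    (hB : ∀ n, f n ≤ B) (hf : ∀ n, c < f n → r * (f n - c) ≤ f (n + 1) - c) : f 0 ≤ c := by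
  by_contra! h0
  have hgrow : ∀ n, r ^ n * (f 0 - c) ≤ f n - c := by
    intro n
    induction n with
    | zero => simp
    | succ n ih =>
      have hpos : c < f n := by
        nlinarith [pow_pos (zero_lt_one.trans hr) n]
      calc r ^ (n + 1) * (f 0 - c) = r * (r ^ n * (f 0 - c)) := by ring
        _ ≤ r * (f n - c) := by gcongr
        _ ≤ f (n + 1) - c := hf n hpos
  obtain ⟨n, hn⟩ := pow_unbounded_of_one_lt ((B - c) / (f 0 - c)) hr
  rw [div_lt_iff₀ (sub_pos.2 h0)] at hn
  linarith [hgrow n, hB n]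

theorem abs_sub_round_lt_half_of_irrational {t : ℝ} (ht : Irrational t) :
    |t - round t| < 1 / 2 := by
  refine (abs_sub_round t).lt_of_ne fun h => ?_
  rcases abs_eq (by norm_num : (0 : ℝ) ≤ 1 / 2) |>.mp h with h' | h'
  · exact (ht.sub_intCast (round t)) ⟨1 / 2, by push_cast; linarith⟩
  · exact (ht.sub_intCast (round t)) ⟨-(1 / 2), by push_cast; linarith⟩

noncomputable def nicfRem (x : ℝ) (i : ℕ) : ℝ := nicfX x i - nicfDigit x i

theorem nicfX_succ (x : ℝ) (i : ℕ) : nicfX x (i + 1) = (nicfRem x i)⁻¹ :=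
  one_div _

theorem nicfDigit_succ (x : ℝ) (i : ℕ) : nicfDigit x (i + 1) = round (nicfRem x i)⁻¹ := by
  rw [nicfDigit, nicfX_succ]

theorem nicfRem_succ (x : ℝ) (i : ℕ) :
    nicfRem x (i + 1) = (nicfRem x i)⁻¹ - nicfDigit x (i + 1) := by
  rw [nicfRem, nicfX_succ]

theorem nicfRem_zero_of_mem_Ico {x : ℝ} (hx : x ∈ Set.Ico (-(1 / 2)) (1 / 2)) :
    nicfRem x 0 = x := by
  simp [nicfRem, nicfDigit, nicfX, round_eq_zero_iff.2 hx]

theorem Irrational.nicfX {x : ℝ} (hx : Irrational x) (n : ℕ) : Irrational (nicfX x n) := by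
  induction n with
  | zero => exact hx
  | succ n ih => rw [nicfX_succ]; exact (ih.sub_intCast _).inv

theorem nicfDefined_of_irrational {x : ℝ} (hx : Irrational x) (i : ℕ) : nicfDefined x i :=
  fun m _ => (hx.nicfX m).ne_int _

theorem abs_nicfRem_lt_half {x : ℝ} (hx : Irrational x) (i : ℕ) : |nicfRem x i| < 1 / 2 :=
  abs_sub_round_lt_half_of_irrational (hx.nicfX i)

theorem sqrt_six_sub_two_sq_add_four_mul : (√6 - 2) ^ 2 + 4 * (√6 - 2) = 2 := by
  nlinarith [Real.sq_sqrt (show (0 : ℝ) ≤ 6 by norm_num)]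

theorem sqrt_six_sub_two_mem_Ioo : √6 - 2 ∈ Set.Ioo (0.449 : ℝ) 0.45 := by
  have h := Real.sq_sqrt (show (0 : ℝ) ≤ 6 by norm_num)
  constructor <;> nlinarith [Real.sqrt_nonneg 6]

theorem irrational_sqrt_six_sub_two : Irrational (√6 - 2) := by
  simpa using (show Irrational √6 by norm_num).sub_natCast 2

theorem inv_sqrt_six_sub_two : (√6 - 2)⁻¹ = (√6 - 2) / 2 + 2 := by
  have := sqrt_six_sub_two_mem_Ioo.1
  field_simp
  nlinarith [sqrt_six_sub_two_sq_add_four_mul]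

theorem inv_sqrt_six_sub_two_div_two : ((√6 - 2) / 2)⁻¹ = √6 - 2 + 4 := by
  have := sqrt_six_sub_two_mem_Ioo.1
  field_simp
  nlinarith [sqrt_six_sub_two_sq_add_four_mul]

theorem round_inv_eq_two {u : ℝ} (h : √6 - 2 < u) (hu : u < 1 / 2) : round u⁻¹ = 2 := by
  obtain ⟨hα, hα'⟩ := sqrt_six_sub_two_mem_Ioo
  have h1 : 2 < u⁻¹ := by rw [lt_inv_comm₀] <;> norm_num <;> linarith
  have h2 : u⁻¹ < (√6 - 2)⁻¹ := inv_strictAnti₀ (by norm_num; linarith) h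
  rw [inv_sqrt_six_sub_two] at h2
  rw [round_eq_iff]
  constructor <;> push_cast <;> linarith

theorem two_mul_sub_le_inv_inv_sub_two {u : ℝ} (h : √6 - 2 < u) (hu : u < 1 / 2) :
    2 * (u - (√6 - 2)) ≤ (u⁻¹ - 2)⁻¹ - 4 - (√6 - 2) := by
  obtain ⟨hα, hα'⟩ := sqrt_six_sub_two_mem_Ioo
  have hα2 := sqrt_six_sub_two_sq_add_four_mul
  have hu0 : 0 < u := by linarith
  have h12 : 0 < 1 - 2 * u := by linarith
  have : (u⁻¹ - 2)⁻¹ = u / (1 - 2 * u) := by field_simp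
  -- As `α / (1 - 2α) = α + 4`, the right side is `(u - α) / ((1 - 2u)(1 - 2α))`; `1 - 2α < 1/2`.
  rw [this, le_sub_iff_add_le, le_sub_iff_add_le, le_div_iff₀ h12]
  nlinarith [mul_pos (sub_pos.2 h) h12]

theorem nicfDigit_succ_le_of_mem_NICFset {x : ℝ} {r : ℤ} (hx : x ∈ NICFset r) (hirr : Irrational x)
    (i : ℕ) : nicfDigit x (i + 1) ≤ r :=
  (abs_le.1 (hx (i + 1) (Nat.le_add_left 1 i) (nicfDefined_of_irrational hirr _))).2

theorem sqrt_six_sub_two_lt_nicfRem_succ {x : ℝ} (hx : x ∈ NICFset 4) (hirr : Irrational x)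
    {i : ℕ} (h0 : 0 < nicfRem x i) (h : nicfRem x i < (√6 - 2) / 2) :
    √6 - 2 < nicfRem x (i + 1) := by
  have hinv : ((√6 - 2) / 2)⁻¹ < (nicfRem x i)⁻¹ := inv_strictAnti₀ h0 h
  have hdig := nicfDigit_succ_le_of_mem_NICFset hx hirr i
  rw [inv_sqrt_six_sub_two_div_two] at hinv
  rw [nicfRem_succ]
  have : (nicfDigit x (i + 1) : ℝ) ≤ 4 := by exact_mod_cast hdig
  linarith

theorem two_mul_sub_le_nicfRem_add_two_sub {x : ℝ} (hx : x ∈ NICFset 4) (hirr : Irrational x)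
    {i : ℕ} (h : √6 - 2 < nicfRem x i) :
    2 * (nicfRem x i - (√6 - 2)) ≤ nicfRem x (i + 2) - (√6 - 2) := by
  have hu := (abs_lt.1 (abs_nicfRem_lt_half hirr i)).2
  have hdig₁ : nicfDigit x (i + 1) = 2 := by
    rw [nicfDigit_succ]; exact round_inv_eq_two h hu
  have hrem₁ : nicfRem x (i + 1) = (nicfRem x i)⁻¹ - 2 := by
    rw [nicfRem_succ, hdig₁]; norm_num
  have hdig₂ : (nicfDigit x (i + 2) : ℝ) ≤ 4 := by
    exact_mod_cast nicfDigit_succ_le_of_mem_NICFset hx hirr (i + 1)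
  have := two_mul_sub_le_inv_inv_sub_two h hu
  rw [nicfRem_succ, hrem₁]
  linarith

theorem nicfRem_le_sqrt_six_sub_two {x : ℝ} (hx : x ∈ NICFset 4) (hirr : Irrational x) (i : ℕ) :
    nicfRem x i ≤ √6 - 2 := by
  refine le_of_forall_lt_imp_mul_sub_le (f := fun n => nicfRem x (i + 2 * n)) one_lt_two
    (fun n => (abs_lt.1 (abs_nicfRem_lt_half hirr _)).2.le) fun n h => ?_
  exact two_mul_sub_le_nicfRem_add_two_sub hx hirr h

theorem half_sqrt_six_sub_two_le_nicfRem {x : ℝ} (hx : x ∈ NICFset 4) (hirr : Irrational x)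
    {i : ℕ} (h0 : 0 < nicfRem x i) : (√6 - 2) / 2 ≤ nicfRem x i := by
  by_contra! h
  exact (sqrt_six_sub_two_lt_nicfRem_succ hx hirr h0 h).not_ge
    (nicfRem_le_sqrt_six_sub_two hx hirr (i + 1))

theorem round_sqrt_six_sub_two_add_two : round ((√6 - 2) / 2 + 2) = 2 := by
  obtain ⟨hα, hα'⟩ := sqrt_six_sub_two_mem_Ioo
  rw [round_eq_iff]
  constructor <;> push_cast <;> linarith

theorem round_sqrt_six_sub_two_add_four : round (√6 - 2 + 4) = 4 := by
  obtain ⟨hα, hα'⟩ := sqrt_six_sub_two_mem_Ioo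
  rw [round_eq_iff]
  constructor <;> push_cast <;> linarith

theorem nicfRem_succ_mem_of_mem {x : ℝ} {i : ℕ}
    (h : nicfRem x i ∈ ({√6 - 2, (√6 - 2) / 2} : Set ℝ)) :
    nicfDigit x (i + 1) ∈ ({2, 4} : Set ℤ) ∧
      nicfRem x (i + 1) ∈ ({√6 - 2, (√6 - 2) / 2} : Set ℝ) := by
  rw [nicfRem_succ, nicfDigit_succ]
  rcases h with h | h <;> rw [h]
  · rw [inv_sqrt_six_sub_two, round_sqrt_six_sub_two_add_two]
    norm_num
  · rw [inv_sqrt_six_sub_two_div_two, round_sqrt_six_sub_two_add_four]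
    norm_num

theorem mem_NICF4irr_of_mem {x : ℝ} (hx : x ∈ Set.Ico (-(1 / 2)) (1 / 2))
    (hirr : Irrational x) (h : x ∈ ({√6 - 2, (√6 - 2) / 2} : Set ℝ)) : x ∈ NICF4irr := by
  have hrem : ∀ i, nicfRem x i ∈ ({√6 - 2, (√6 - 2) / 2} : Set ℝ) := by
    intro i
    induction i with
    | zero => rwa [nicfRem_zero_of_mem_Ico hx]
    | succ i ih => exact (nicfRem_succ_mem_of_mem ih).2
  refine ⟨fun i hi _ => ?_, hx.1, hx.2, hirr⟩
  obtain ⟨i, rfl⟩ := Nat.exists_eq_add_of_le' hi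
  rcases (nicfRem_succ_mem_of_mem (hrem i)).1 with h | h <;> rw [h] <;> norm_num

theorem nicf4irr_smallest_positive_and_largest :
    (∀ x ∈ NICF4irr, 0 < x → (Real.sqrt 6 - 2) / 2 ≤ x ∧ x ≤ Real.sqrt 6 - 2) ∧
    0 < (Real.sqrt 6 - 2) / 2 ∧
    (Real.sqrt 6 - 2) / 2 ∈ NICF4irr ∧
    Real.sqrt 6 - 2 ∈ NICF4irr := by
  obtain ⟨hα, hα'⟩ := sqrt_six_sub_two_mem_Ioo
  refine ⟨?_, by linarith, ?_, ?_⟩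
  · rintro x ⟨hx, hlo, hhi, hirr⟩ hpos
    have hrem₀ := nicfRem_zero_of_mem_Ico ⟨hlo, hhi⟩
    rw [← hrem₀] at hpos ⊢
    exact ⟨half_sqrt_six_sub_two_le_nicfRem hx hirr hpos, nicfRem_le_sqrt_six_sub_two hx hirr 0⟩
  · refine mem_NICF4irr_of_mem ⟨by linarith, by linarith⟩ ?_ (by simp)
    simpa using irrational_sqrt_six_sub_two.div_natCast two_ne_zero
  · exact mem_NICF4irr_of_mem ⟨by linarith, by linarith⟩ irrational_sqrt_six_sub_two (by simp)
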